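/- Let G = (V, E) be a cocomparability graph and let σ be an umbrella-free ordering of G. Then there exists an ordering τ of V such that: (i) τ satisfies the LexDFS 4-point condition; (ii) τ is umbrella-free; and (iii) for every pair of vertices u, v with uv ∉ E, u ≺_σ v if and only if v ≺_τ u. In particular, every cocomparability graph admits an ordering that is simultaneously a LexDFS ordering and a cocomparability ordering. -/

import Mathlib

/-- `σ` is an umbrella-free (cocomparability) ordering of `G`. -/
def UmbrellaFree {V : Type*} {n : ℕ} (G : SimpleGraph V) (σ : Fin n ≃ V) : Prop :=
  ∀ i j k : Fin n, i < j → j < k → G.Adj (σ i) (σ k) →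
    G.Adj (σ i) (σ j) ∨ G.Adj (σ j) (σ k)

/-- The LexDFS 4-point condition for the ordering `σ` of `G`. -/
def FourPointLexDFS {V : Type*} {n : ℕ} (G : SimpleGraph V) (σ : Fin n ≃ V) : Prop :=
  ∀ i j k : Fin n, i < j → j < k → G.Adj (σ i) (σ k) → ¬ G.Adj (σ i) (σ j) →
    ∃ d : Fin n, i < d ∧ d < j ∧ G.Adj (σ d) (σ j) ∧ ¬ G.Adj (σ d) (σ k)

/-!
Run LexDFS⁺ on `σ`: at each step visit an unvisited vertex whose label (the set of positions of
its already visited neighbours) is colex-maximal, breaking ties by taking the `σ`-last one.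
Such a greedy ordering `τ` satisfies the 4-point condition for any graph. If `σ` is
umbrella-free, `τ` reverses `σ` on every non-edge `pq` with `p ≺_σ q`: otherwise, when `p` is
visited before `q`, the label of `p` must beat that of `q` at a visited `d ~ p, d ≁ q`, and `d`
lies neither before `q` in `σ` (by induction `q` would then precede `d` in `τ`) nor after it
(`p, q, d` would be an umbrella). Reversing all non-edges of an umbrella-free ordering keeps it
umbrella-free.
-/

open Finset

section LexDFSPlus

variable {V : Type*} {n : ℕ} (G : SimpleGraph V)

open Classical in
noncomputable def lexLabel (τ : Fin n ≃ V) (s : Fin n) (x : V) : Finset (Fin n) :=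
  univ.filter fun d => d < s ∧ G.Adj (τ d) x

noncomputable def lexKey (σ τ : Fin n ≃ V) (s : Fin n) (x : V) : Colex (Finset (Fin n)) ×ₗ Fin n :=
  toLex (toColex (lexLabel G τ s x), σ.symm x)

def IsLexDFSPlus (σ τ : Fin n ≃ V) : Prop :=
  ∀ s y, s ≤ τ.symm y → lexKey G σ τ s y ≤ lexKey G σ τ s (τ s)

def ReversesNonEdges (σ τ : Fin n ≃ V) : Prop :=
  ∀ u v, ¬ G.Adj u v → σ.symm u < σ.symm v → τ.symm v < τ.symm u

variable {G} {σ τ : Fin n ≃ V}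

theorem UmbrellaFree.adj_or_adj (hσ : UmbrellaFree G σ) {a b c : V}
    (hab : σ.symm a < σ.symm b) (hbc : σ.symm b < σ.symm c) (hac : G.Adj a c) :
    G.Adj a b ∨ G.Adj b c := by
  simpa using hσ _ _ _ hab hbc (by simpa using hac)

theorem ReversesNonEdges.lt_of_not_adj (h : ReversesNonEdges G σ τ) {u v : V}
    (huv : ¬ G.Adj u v) (hτ : τ.symm u < τ.symm v) : σ.symm v < σ.symm u := by
  rcases lt_trichotomy (σ.symm u) (σ.symm v) with hσ | hσ | hσ
  · exact absurd (h u v huv hσ) hτ.not_gt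
  · rw [σ.symm.injective hσ] at hτ
    exact absurd hτ (lt_irrefl _)
  · exact hσ

theorem ReversesNonEdges.lt_iff (h : ReversesNonEdges G σ τ) {u v : V} (huv : ¬ G.Adj u v) :
    σ.symm u < σ.symm v ↔ τ.symm v < τ.symm u :=
  ⟨h u v huv, h.lt_of_not_adj fun hvu => huv hvu.symm⟩

theorem ReversesNonEdges.umbrellaFree (h : ReversesNonEdges G σ τ) (hσ : UmbrellaFree G σ) :
    UmbrellaFree G τ := by
  intro i j k hij hjk hik
  by_contra! hnot
  have hji : σ.symm (τ j) < σ.symm (τ i) := h.lt_of_not_adj hnot.1 (by simpa using hij)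
  have hkj : σ.symm (τ k) < σ.symm (τ j) := h.lt_of_not_adj hnot.2 (by simpa using hjk)
  rcases hσ.adj_or_adj hkj hji hik.symm with hadj | hadj
  · exact hnot.2 hadj.symm
  · exact hnot.1 hadj.symm

theorem mem_lexLabel {s d : Fin n} {x : V} : d ∈ lexLabel G τ s x ↔ d < s ∧ G.Adj (τ d) x := by
  simp [lexLabel]

theorem lexLabel_congr {τ' : Fin n ≃ V} {s : Fin n} (h : ∀ d < s, τ' d = τ d) (x : V) :
    lexLabel G τ' s x = lexLabel G τ s x := by
  ext d
  simp only [mem_lexLabel]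
  exact and_congr_right fun hd => by rw [h d hd]

theorem exists_lt_of_lexKey_le {s i : Fin n} {x y : V}
    (hkey : lexKey G σ τ s y ≤ lexKey G σ τ s x)
    (hy : i ∈ lexLabel G τ s y) (hx : i ∉ lexLabel G τ s x) :
    ∃ m ∈ lexLabel G τ s x, m ∉ lexLabel G τ s y ∧ i < m := by
  have hcolex : toColex (lexLabel G τ s y) ≤ toColex (lexLabel G τ s x) :=
    (Prod.Lex.toLex_le_toLex.1 hkey).elim le_of_lt fun h => h.1.le
  obtain ⟨m, hmx, hmy, him⟩ := Colex.toColex_le_toColex.1 hcolex hy hx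
  exact ⟨m, hmx, hmy, lt_of_le_of_ne him (by rintro rfl; exact hx hmx)⟩

theorem exists_of_lexKey_le {s : Fin n} {x y : V}
    (hkey : lexKey G σ τ s y ≤ lexKey G σ τ s x) (hxy : σ.symm x < σ.symm y) :
    ∃ m ∈ lexLabel G τ s x, m ∉ lexLabel G τ s y := by
  rcases Prod.Lex.toLex_le_toLex.1 hkey with hlt | ⟨_, hle⟩
  · obtain ⟨m, hmx, hmy, -⟩ := Colex.toColex_lt_toColex_iff_exists_forall_lt.1 hlt
    exact ⟨m, hmx, hmy⟩
  · exact absurd hle hxy.not_ge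

theorem IsLexDFSPlus.fourPointLexDFS (hτ : IsLexDFSPlus G σ τ) : FourPointLexDFS G τ := by
  intro i j k hij hjk hik hnij
  have hkey := hτ j (τ k) (by simpa using hjk.le)
  obtain ⟨m, hmj, hmk, him⟩ := exists_lt_of_lexKey_le hkey (mem_lexLabel.2 ⟨hij, hik⟩)
    fun hi => hnij (mem_lexLabel.1 hi).2
  exact ⟨m, him, (mem_lexLabel.1 hmj).1, (mem_lexLabel.1 hmj).2,
    fun hadj => hmk (mem_lexLabel.2 ⟨(mem_lexLabel.1 hmj).1, hadj⟩)⟩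

theorem IsLexDFSPlus.reversesNonEdges (hτ : IsLexDFSPlus G σ τ) (hσ : UmbrellaFree G σ) :
    ReversesNonEdges G σ τ := by
  suffices ∀ s : Fin n, ∀ p q, τ.symm p = s → ¬ G.Adj p q → σ.symm p < σ.symm q →
      τ.symm q < τ.symm p from fun p q => this _ p q rfl
  intro s
  induction s using WellFoundedLT.induction with
  | _ s ih =>
  intro p q rfl hpq hσpq
  by_contra! hτpq
  have hkey := hτ (τ.symm p) q hτpq
  rw [Equiv.apply_symm_apply] at hkey
  obtain ⟨m, hmp, hmq⟩ := exists_of_lexKey_le hkey hσpq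
  obtain ⟨hm, hadj⟩ := mem_lexLabel.1 hmp
  have hnadj : ¬ G.Adj (τ m) q := fun h => hmq (mem_lexLabel.2 ⟨hm, h⟩)
  rcases lt_trichotomy (σ.symm (τ m)) (σ.symm q) with hlt | heq | hgt
  · have := ih m hm (τ m) q (by simp) hnadj hlt
    simp only [Equiv.symm_apply_apply] at this
    exact absurd (this.trans hm) hτpq.not_gt
  · rw [σ.symm.injective heq] at hadj
    exact hpq hadj.symm
  · rcases hσ.adj_or_adj hσpq hgt hadj.symm with h | h
    · exact hpq h
    · exact hnadj h.symm

variable (G σ)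

noncomputable def lexKeySeq (τ : Fin n ≃ V) : Lex (Fin n → Colex (Finset (Fin n)) ×ₗ Fin n) :=
  toLex fun s => lexKey G σ τ s (τ s)

/-- A `τ` with lexicographically maximal key sequence is greedy: were some later `y` to beat
`τ s` at step `s`, swapping `y` into position `s` would keep the keys before `s` and increase
the key at `s`. -/
theorem exists_isLexDFSPlus : ∃ τ, IsLexDFSPlus G σ τ := by
  classical
  have : Nonempty (Fin n ≃ V) := ⟨σ⟩
  obtain ⟨τ, hmax⟩ := Finite.exists_max (lexKeySeq G σ)
  refine ⟨τ, fun s y hsy => ?_⟩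
  by_contra! hlt
  set τ' := τ.trans (Equiv.swap (τ s) y)
  have hτ's : τ' s = y := by simp [τ']
  have hbefore : ∀ d < s, τ' d = τ d := fun d hd =>
    Equiv.swap_apply_of_ne_of_ne (τ.injective.ne hd.ne)
      fun h => (hd.trans_le hsy).ne (by simp [← h])
  refine (hmax τ').not_gt ⟨s, fun t ht => ?_, ?_⟩
  · simp only [lexKeySeq, Pi.toLex_apply, lexKey, hbefore t ht,
      lexLabel_congr (fun d hd => hbefore d (hd.trans ht))]
  · simpa only [lexKeySeq, Pi.toLex_apply, lexKey, hτ's, lexLabel_congr hbefore] using hlt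

end LexDFSPlus

theorem exists_lexdfs_cocomp_ordering_general {V : Type*} (G : SimpleGraph V)
    {n : ℕ} (σ : Fin n ≃ V) (hσ : UmbrellaFree G σ) :
    ∃ τ : Fin n ≃ V, FourPointLexDFS G τ ∧ UmbrellaFree G τ ∧
      ∀ u v : V, ¬ G.Adj u v → (σ.symm u < σ.symm v ↔ τ.symm v < τ.symm u) := by
  obtain ⟨τ, hτ⟩ := exists_isLexDFSPlus G σ
  have hrev := hτ.reversesNonEdges hσ
  exact ⟨τ, hτ.fourPointLexDFS, hrev.umbrellaFree hσ, fun _ _ => hrev.lt_iff⟩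

/-- Every cocomparability graph (given with an umbrella-free ordering `σ`) admits an
ordering `τ` that (i) satisfies the LexDFS 4-point condition, (ii) is umbrella-free,
and (iii) reverses `σ` on non-edges: for `uv ∉ E`, `u ≺_σ v ↔ v ≺_τ u`.  In particular
every cocomparability graph has an ordering that is simultaneously a LexDFS ordering
and a cocomparability ordering. -/
theorem exists_lexdfs_cocomp_ordering {V : Type*} [Fintype V] (G : SimpleGraph V)
    {n : ℕ} (σ : Fin n ≃ V) (hσ : UmbrellaFree G σ) :
    ∃ τ : Fin n ≃ V, FourPointLexDFS G τ ∧ UmbrellaFree G τ ∧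
      ∀ u v : V, ¬ G.Adj u v → (σ.symm u < σ.symm v ↔ τ.symm v < τ.symm u) :=
  exists_lexdfs_cocomp_ordering_general G σ hσ
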